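/- arXiv:2406.06917 — 14 statements merged into one kernel-verified Lean document; each statement's English description precedes it below -/
import Mathlib

section
/- Let L be a monadic ortholattice, and consider its MacLaren orthoframe (L*, ⊥, R). For every bi-orthogonally closed subset A ⊆ L*, one has R[A]^⊥⊥ = (⋃_{a ∈ A} R[g(a)]^⊥⊥)^⊥⊥; that is, the quantifier of the complete ortholattice of bi-orthogonally closed subsets agrees on bi-orthogonally closed sets with the MacNeille extension ⋁{∃ g(a) : a ∈ A} of ∃. -/
open Set

/-- The orthogonal `S^⊥` of a set with respect to an orthogonality relation. -/
def oset {X : Type*} (perp : X → X → Prop) (S : Set X) : Set X := {y | ∀ x ∈ S, perp x y}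

/-- The relational image `R[A]`. -/
def relImg {X : Type*} (R : X → X → Prop) (A : Set X) : Set X := {y | ∃ x ∈ A, R x y}

/-- `c` is an orthocomplementation on the bounded lattice `L`. -/
structure IsOrthocompl {L : Type*} [Lattice L] [BoundedOrder L] (c : L → L) : Prop where
  antitone : ∀ a b : L, a ≤ b → c b ≤ c a
  involutive : ∀ a : L, c (c a) = a
  inf_compl : ∀ a : L, a ⊓ c a = ⊥
  sup_compl : ∀ a : L, a ⊔ c a = ⊤

/-- `E` is a quantifier on the ortholattice `(L, c)`, making it a monadic ortholattice. -/
structure IsQuantifier {L : Type*} [Lattice L] [BoundedOrder L] (c E : L → L) : Prop where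
  le_exists : ∀ a : L, a ≤ E a
  mono : ∀ a b : L, a ≤ b → E a ≤ E b
  idem : ∀ a : L, E (E a) = E a
  compl_closed : ∀ a : L, c (E a) = E (c (E a))

/-- The underlying set `L*` of the MacLaren orthoframe: the nonzero elements of `L`. -/
abbrev LStar (L : Type*) [Lattice L] [BoundedOrder L] := {a : L // a ≠ ⊥}

/-- MacLaren orthogonality: `a ⊥ b` iff `a ≤ b′`. -/
def mperp {L : Type*} [Lattice L] [BoundedOrder L] (c : L → L) (a b : LStar L) : Prop :=
  a.1 ≤ c b.1

/-- The MacLaren relation: `a R b` iff `b ≤ ∃a`. -/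
def mR {L : Type*} [Lattice L] [BoundedOrder L] (E : L → L) (a b : LStar L) : Prop :=
  b.1 ≤ E a.1

/-- `g(a) = {b ∈ L* : b ≤ a}`. -/
def gmap {L : Type*} [Lattice L] [BoundedOrder L] (a : L) : Set (LStar L) := {b | b.1 ≤ a}


lemma oset_anti {X : Type*} (perp : X → X → Prop) {S T : Set X} (h : S ⊆ T) :
    oset perp T ⊆ oset perp S := fun y hy x hx => hy x (h hx)

lemma sub_oo {X : Type*} {perp : X → X → Prop} (hsym : ∀ a b, perp a b → perp b a)
    (S : Set X) : S ⊆ oset perp (oset perp S) := fun x hx y hy => hsym x y (hy x hx)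

lemma oo_oo {X : Type*} {perp : X → X → Prop} (hsym : ∀ a b, perp a b → perp b a)
    (S : Set X) : oset perp (oset perp (oset perp S)) = oset perp S := by
  apply Set.Subset.antisymm
  · exact oset_anti perp (sub_oo hsym S)
  · exact sub_oo hsym (oset perp S)

/-- For a monadic ortholattice `L` and a bi-orthogonally closed `A ⊆ L*`,
`R[A]^⊥⊥ = (⋃_{a ∈ A} R[g(a)]^⊥⊥)^⊥⊥`. -/
theorem stmt0 {L : Type*} [Lattice L] [BoundedOrder L] (c E : L → L)
    (hc : IsOrthocompl c) (hE : IsQuantifier c E)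
    (A : Set (LStar L)) (hA : oset (mperp c) (oset (mperp c) A) = A) :
    oset (mperp c) (oset (mperp c) (relImg (mR E) A)) =
      oset (mperp c) (oset (mperp c)
        (⋃ a ∈ A, oset (mperp c) (oset (mperp c) (relImg (mR E) (gmap a.1))))) := by
  have hsym : ∀ a b, mperp c a b → mperp c b a := by
    intro a b h
    have := hc.antitone _ _ h
    rw [hc.involutive] at this
    exact this
  set U := ⋃ a ∈ A, oset (mperp c) (oset (mperp c) (relImg (mR E) (gmap a.1))) with hU
  have h1 : relImg (mR E) A ⊆ U := by
    intro y ⟨x, hxA, hxy⟩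
    apply Set.mem_biUnion hxA
    exact sub_oo hsym _ ⟨x, le_refl x.1, hxy⟩
  have h2 : U ⊆ oset (mperp c) (oset (mperp c) (relImg (mR E) A)) := by
    apply Set.iUnion₂_subset
    intro a ha
    have hsub : relImg (mR E) (gmap a.1) ⊆ relImg (mR E) A := by
      intro y ⟨x, hx, hxy⟩
      exact ⟨a, ha, le_trans hxy (hE.mono _ _ hx)⟩
    exact oset_anti _ (oset_anti _ hsub)
  apply Set.Subset.antisymm
  · exact oset_anti _ (oset_anti _ h1)
  · calc oset (mperp c) (oset (mperp c) U)
        ⊆ oset (mperp c) (oset (mperp c) (oset (mperp c) (oset (mperp c) (relImg (mR E) A)))) :=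
          oset_anti _ (oset_anti _ h2)
      _ = oset (mperp c) (oset (mperp c) (relImg (mR E) A)) := by
          rw [oo_oo hsym]
end

section
/- Let L be an ortholattice, (F(L), ⊥) its Goldblatt orthoframe, and h(a) = {x ∈ F(L) : a ∈ x}. For all subsets S, T ⊆ L: if ⋂_{a ∈ S} h(a) ⊆ (⋃_{a ∈ T} h(a))^⊥⊥, then there exist finite subsets S′ ⊆ S and T′ ⊆ T with ⋀S′ ≤ ⋁T′ in L (with the conventions ⋀∅ = 1 and ⋁∅ = 0). (This is the compactness half of the statement that h : L → B(F(L), ⊥) is the canonical completion of L.) -/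
open Set

/-- A proper filter of a bounded lattice: nonempty, upward closed, closed under
binary meets, and not containing `⊥`. -/
def IsProperFilter {L : Type*} [Lattice L] [BoundedOrder L] (x : Set L) : Prop :=
  x.Nonempty ∧ (∀ a ∈ x, ∀ b : L, a ≤ b → b ∈ x) ∧
    (∀ a ∈ x, ∀ b ∈ x, a ⊓ b ∈ x) ∧ (⊥ : L) ∉ x

/-- The set of proper filters of `L` (the underlying set of the Goldblatt orthoframe). -/
abbrev FL (L : Type*) [Lattice L] [BoundedOrder L] := {x : Set L // IsProperFilter x}

/-- Goldblatt orthogonality: `x ⊥ y` iff some `a` has `a ∈ x` and `a′ ∈ y`. -/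
def gperp {L : Type*} [Lattice L] [BoundedOrder L] (c : L → L) (x y : FL L) : Prop :=
  ∃ a : L, a ∈ x.1 ∧ c a ∈ y.1

/-- The relation `x R y` iff `∃[x] ⊆ y`, where `∃[x] = {∃a : a ∈ x}`. -/
def gR {L : Type*} [Lattice L] [BoundedOrder L] (E : L → L) (x y : FL L) : Prop :=
  E '' x.1 ⊆ y.1

/-- `h(a) = {x ∈ F(L) : a ∈ x}`. -/
def hset {L : Type*} [Lattice L] [BoundedOrder L] (a : L) : Set (FL L) := {x | a ∈ x.1}

/-- Compactness of the embedding `h : L → B(F(L), ⊥)`: if `⋂_{a ∈ S} h(a) ⊆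
(⋃_{a ∈ T} h(a))^⊥⊥` then there are finite `S′ ⊆ S`, `T′ ⊆ T` with `⋀S′ ≤ ⋁T′`
(with `⋀∅ = 1`, `⋁∅ = 0`). -/
theorem stmt2 {L : Type*} [Lattice L] [BoundedOrder L] (c : L → L)
    (hc : IsOrthocompl c) (S T : Set L)
    (h : (⋂ a ∈ S, hset a) ⊆ oset (gperp c) (oset (gperp c) (⋃ a ∈ T, hset a))) :
    ∃ S' T' : Finset L, ↑S' ⊆ S ∧ ↑T' ⊆ T ∧ S'.inf id ≤ T'.sup id := by
  classical
  by_contra hcon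
  push_neg at hcon
  have cbot : c (⊥ : L) = ⊤ := by
    have := hc.sup_compl (⊥ : L)
    simpa using this
  -- filter generated by S
  set xs : Set L := {d | ∃ S' : Finset L, ↑S' ⊆ S ∧ S'.inf id ≤ d} with hxs
  have hxf : IsProperFilter xs := by
    refine ⟨⟨⊤, ∅, by simp⟩, ?_, ?_, ?_⟩
    · rintro a ⟨S', hS', hle⟩ b hab
      exact ⟨S', hS', hle.trans hab⟩
    · rintro a ⟨S1, h1, le1⟩ b ⟨S2, h2, le2⟩
      refine ⟨S1 ∪ S2, ?_, ?_⟩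
      · push_cast; exact Set.union_subset h1 h2
      · rw [Finset.inf_union]
        exact inf_le_inf le1 le2
    · rintro ⟨S', hS', hle⟩
      exact hcon S' ∅ hS' (by simp) (by simpa using hle)
  -- filter generated by complements of finite joins of T
  set ys : Set L := {d | ∃ T' : Finset L, ↑T' ⊆ T ∧ c (T'.sup id) ≤ d} with hys
  have hyf : IsProperFilter ys := by
    refine ⟨⟨⊤, ∅, by simp⟩, ?_, ?_, ?_⟩
    · rintro a ⟨T', hT', hle⟩ b hab
      exact ⟨T', hT', hle.trans hab⟩
    · rintro a ⟨T1, h1, le1⟩ b ⟨T2, h2, le2⟩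
      refine ⟨T1 ∪ T2, ?_, ?_⟩
      · push_cast; exact Set.union_subset h1 h2
      · rw [Finset.sup_union]
        refine le_inf ?_ ?_
        · exact (hc.antitone _ _ le_sup_left).trans le1
        · exact (hc.antitone _ _ le_sup_right).trans le2
    · rintro ⟨T', hT', hle⟩
      have hb : c (T'.sup id) = ⊥ := le_bot_iff.mp hle
      have : T'.sup id = ⊤ := by
        have := congrArg c hb
        rw [hc.involutive, cbot] at this
        exact this
      exact hcon ∅ T' (by simp) hT' (by simp [this])
  set x : FL L := ⟨xs, hxf⟩
  set y : FL L := ⟨ys, hyf⟩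
  have hxmem : x ∈ ⋂ a ∈ S, hset a := by
    simp only [Set.mem_iInter]
    intro a ha
    exact ⟨{a}, by simpa using ha, by simp⟩
  have hy : y ∈ oset (gperp c) (⋃ a ∈ T, hset a) := by
    intro z hz
    simp only [Set.mem_iUnion] at hz
    obtain ⟨b, hbT, hbz⟩ := hz
    exact ⟨b, hbz, ⟨{b}, by simpa using hbT, by simp⟩⟩
  obtain ⟨a, hay, hax⟩ := h hxmem y hy
  obtain ⟨T', hT', hleT⟩ := hay
  obtain ⟨S', hS', hleS⟩ := hax
  refine hcon S' T' hS' hT' ?_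
  calc S'.inf id ≤ c a := hleS
    _ ≤ c (c (T'.sup id)) := hc.antitone _ _ hleT
    _ = T'.sup id := hc.involutive _
end

section
/- Let L be a monadic ortholattice and define a binary relation R on the set F(L) of proper filters of L by x R y iff ∃[x] ⊆ y, where ∃[x] = {∃a : a ∈ x}. Then R is reflexive, R is transitive, and R[R[{x}]^⊥] ⊆ R[{x}]^⊥ for every x ∈ F(L); that is, (F(L), ⊥, R) is a monadic orthoframe. -/
open Set

/-- For a monadic ortholattice `L`, the relation `x R y` iff `∃[x] ⊆ y` on `F(L)` is
reflexive and transitive and satisfies `R[R[{x}]^⊥] ⊆ R[{x}]^⊥`; that is,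
`(F(L), ⊥, R)` is a monadic orthoframe. -/
theorem stmt3 {L : Type*} [Lattice L] [BoundedOrder L] (c E : L → L)
    (hc : IsOrthocompl c) (hE : IsQuantifier c E) :
    Reflexive (gR (L := L) E) ∧ Transitive (gR (L := L) E) ∧
      ∀ x : FL L, relImg (gR E) (oset (gperp c) (relImg (gR E) {x})) ⊆
        oset (gperp c) (relImg (gR E) {x}) := by
  refine ⟨?_, ?_, ?_⟩
  · intro x
    rintro a ⟨b, hb, rfl⟩
    exact x.2.2.1 b hb (E b) (hE.le_exists b)
  · intro x y z hxy hyz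
    rintro a ⟨b, hb, rfl⟩
    have : E (E b) ∈ z.1 := hyz ⟨E b, hxy ⟨b, hb, rfl⟩, rfl⟩
    rwa [hE.idem] at this
  · intro x w hw z hz
    obtain ⟨w', hw', hwz⟩ := hw
    obtain ⟨x', hx', hxz⟩ := hz
    cases hx'
    set y0s : Set L := {b | ∃ a ∈ x.1, E a ≤ b} with hy0s
    have hy0 : IsProperFilter y0s := by
      obtain ⟨a0, ha0⟩ := x.2.1
      refine ⟨⟨E a0, a0, ha0, le_rfl⟩, ?_, ?_, ?_⟩
      · rintro b ⟨a, ha, hab⟩ b' hbb'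
        exact ⟨a, ha, hab.trans hbb'⟩
      · rintro b ⟨a, ha, hab⟩ b' ⟨a', ha', hab'⟩
        refine ⟨a ⊓ a', x.2.2.2.1 a ha a' ha', ?_⟩
        exact le_inf ((hE.mono _ _ inf_le_left).trans hab)
          ((hE.mono _ _ inf_le_right).trans hab')
      · rintro ⟨a, ha, hab⟩
        have hle : a ≤ ⊥ := (hE.le_exists a).trans hab
        exact x.2.2.2.2 (x.2.2.1 a ha ⊥ hle)
    have hxy0 : gR E x ⟨y0s, hy0⟩ := by
      rintro b ⟨a, ha, rfl⟩; exact ⟨a, ha, le_rfl⟩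
    obtain ⟨b, ⟨a, ha, hab⟩, hcb⟩ := hw' ⟨y0s, hy0⟩ ⟨x, rfl, hxy0⟩
    have hcEa : c (E a) ∈ w'.1 := w'.2.2.1 (c b) hcb (c (E a)) (hc.antitone _ _ hab)
    have hcEaw : c (E a) ∈ w.1 := by
      have : E (c (E a)) ∈ w.1 := hwz ⟨c (E a), hcEa, rfl⟩
      rwa [← hE.compl_closed] at this
    exact ⟨E a, hxz ⟨a, ha, rfl⟩, hcEaw⟩
end

section
/- Let L be a monadic ortholattice, F(L) its set of proper filters with the Goldblatt orthogonality ⊥, and R the relation x R y iff ∃[x] ⊆ y. Then for every x ∈ F(L), R[{x}]^⊥ = {y ∈ F(L) : (∃a)′ ∈ y for some a ∈ x}. -/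
open Set

/-- For a monadic ortholattice `L` and a proper filter `x`,
`R[{x}]^⊥ = {y : (∃a)′ ∈ y for some a ∈ x}`. -/
theorem stmt4 {L : Type*} [Lattice L] [BoundedOrder L] (c E : L → L)
    (hc : IsOrthocompl c) (hE : IsQuantifier c E) (x : FL L) :
    oset (gperp c) (relImg (gR E) {x}) = {y : FL L | ∃ a ∈ x.1, c (E a) ∈ y.1} := by
  obtain ⟨hne, hup, hmeet, hbot⟩ := x.2
  ext y
  constructor
  · intro hy
    -- the filter generated by E '' x
    have hz : IsProperFilter {b : L | ∃ a ∈ x.1, E a ≤ b} := by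
      refine ⟨?_, ?_, ?_, ?_⟩
      · obtain ⟨a, ha⟩ := hne
        exact ⟨E a, a, ha, le_rfl⟩
      · rintro b ⟨a, ha, hab⟩ b' hbb'
        exact ⟨a, ha, hab.trans hbb'⟩
      · rintro b ⟨a, ha, hab⟩ b' ⟨a', ha', hab'⟩
        refine ⟨a ⊓ a', hmeet a ha a' ha', le_inf ?_ ?_⟩
        · exact (hE.mono _ _ inf_le_left).trans hab
        · exact (hE.mono _ _ inf_le_right).trans hab'
      · rintro ⟨a, ha, hab⟩
        exact hbot (hup a ha ⊥ ((hE.le_exists a).trans hab))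
    have hR : gR E x ⟨_, hz⟩ := by
      rintro b ⟨a, ha, rfl⟩
      exact ⟨a, ha, le_rfl⟩
    obtain ⟨b, ⟨a, ha, hab⟩, hcb⟩ := hy ⟨_, hz⟩ ⟨x, rfl, hR⟩
    exact ⟨a, ha, y.2.2.1 (c b) hcb _ (hc.antitone _ _ hab)⟩
  · rintro ⟨a, ha, hca⟩ z ⟨x', hx', hR⟩
    subst hx'
    exact ⟨E a, hR ⟨a, ha, rfl⟩, hca⟩
end

section
/- Let L be a monadic ortholattice, F(L) its set of proper filters with the Goldblatt orthogonality ⊥, R the relation x R y iff ∃[x] ⊆ y, and h(a) = {x ∈ F(L) : a ∈ x}. Then for every a ∈ L, R[h(a)] = h(∃a); in particular R[h(a)] is bi-orthogonally closed and h(∃a) = R[h(a)]^⊥⊥, so h carries the quantifier of L to the quantifier ∃A = R[A]^⊥⊥ on bi-orthogonally closed sets. -/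
open Set

lemma oc_cTop {L : Type*} [Lattice L] [BoundedOrder L] {c : L → L}
    (hc : IsOrthocompl c) : c (⊤ : L) = ⊥ := by
  have := hc.inf_compl (⊤ : L); simpa using this

lemma oc_cBot {L : Type*} [Lattice L] [BoundedOrder L] {c : L → L}
    (hc : IsOrthocompl c) : c (⊥ : L) = ⊤ := by
  rw [← oc_cTop hc, hc.involutive]

lemma ne_bot_of_compl_ne {L : Type*} [Lattice L] [BoundedOrder L] {c : L → L}
    (hc : IsOrthocompl c) {b : L} (h : b ≠ ⊤) : c b ≠ ⊥ := by
  intro h0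
  apply h
  rw [← hc.involutive b, h0, oc_cBot hc]

lemma up_filter {L : Type*} [Lattice L] [BoundedOrder L] {b : L} (hb : b ≠ ⊥) :
    IsProperFilter {z : L | b ≤ z} := by
  refine ⟨⟨b, le_rfl⟩, ?_, ?_, ?_⟩
  · intro a ha d hd; exact le_trans ha hd
  · intro a ha d hd; exact le_inf ha hd
  · intro h; exact hb (le_bot_iff.mp h)

lemma hset_biorth {L : Type*} [Lattice L] [BoundedOrder L] {c : L → L}
    (hc : IsOrthocompl c) (b : L) :
    oset (gperp c) (oset (gperp c) (hset b)) = hset (b : L) := by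
  ext y
  constructor
  · intro hy
    by_contra hby
    -- b ∉ y.1
    have hbtop : b ≠ ⊤ := by
      rintro rfl
      obtain ⟨e, he⟩ := y.2.1
      exact hby (y.2.2.1 e he ⊤ le_top)
    have hcb : c b ≠ ⊥ := ne_bot_of_compl_ne hc hbtop
    set x : FL L := ⟨{z : L | c b ≤ z}, up_filter hcb⟩ with hx
    have hxperp : x ∈ oset (gperp c) (hset b) := by
      intro z hz
      exact ⟨b, hz, le_rfl⟩
    have := hy x hxperp
    obtain ⟨d, hdx, hdy⟩ := this
    have : c d ≤ b := by
      have := hc.antitone (c b) d hdx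
      rwa [hc.involutive] at this
    exact hby (y.2.2.1 (c d) hdy b this)
  · intro hy x hx
    obtain ⟨d, hdy, hdx⟩ := hx y hy
    exact ⟨c d, hdx, by rwa [hc.involutive]⟩

lemma E_bot {L : Type*} [Lattice L] [BoundedOrder L] {c E : L → L}
    (hc : IsOrthocompl c) (hE : IsQuantifier c E) : E (⊥ : L) = ⊥ := by
  have h1 : E (⊥ : L) ≤ c (E ⊥) := by
    rw [hE.compl_closed]
    exact hE.mono ⊥ _ bot_le
  have := hc.inf_compl (E (⊥ : L))
  rw [inf_eq_left.mpr h1] at this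
  exact this

/-- For a monadic ortholattice `L` and `a ∈ L`, `R[h(a)] = h(∃a)`; in particular
`R[h(a)]` is bi-orthogonally closed and `h(∃a) = R[h(a)]^⊥⊥`. -/
theorem stmt5 {L : Type*} [Lattice L] [BoundedOrder L] (c E : L → L)
    (hc : IsOrthocompl c) (hE : IsQuantifier c E) (a : L) :
    relImg (gR E) (hset a) = hset (E a) ∧
    oset (gperp c) (oset (gperp c) (relImg (gR E) (hset a))) = relImg (gR E) (hset a) ∧
    hset (E a) = oset (gperp c) (oset (gperp c) (relImg (gR E) (hset a))) := by
  have key : relImg (gR E) (hset a) = hset (E a) := by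
    ext y
    constructor
    · rintro ⟨x, hax, hRxy⟩
      exact hRxy ⟨a, hax, rfl⟩
    · intro hy
      have hab : a ≠ ⊥ := by
        rintro rfl
        rw [E_bot hc hE] at hy
        exact y.2.2.2.2 hy
      refine ⟨⟨{z : L | a ≤ z}, up_filter hab⟩, le_rfl, ?_⟩
      rintro _ ⟨d, hd, rfl⟩
      exact y.2.2.1 (E a) hy (E d) (hE.mono a d hd)
  refine ⟨key, ?_, ?_⟩
  · rw [key, hset_biorth hc]
  · rw [key, hset_biorth hc]
end

section
/- Let L be a monadic ortholattice, F(L) its set of proper filters with the Goldblatt orthogonality ⊥, R the relation x R y iff ∃[x] ⊆ y, and for x ∈ F(L) let K_x = {y ∈ F(L) : x ⊆ y}. Then for every x ∈ F(L), ⋂_{a ∈ x} h(∃a) = R[K_x] = {y ∈ F(L) : ∃[x] ⊆ y}, and this set is bi-orthogonally closed; hence the canonical extension of ∃ on the closed element K_x equals R[K_x]^⊥⊥. -/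
open Set

/-- `K_x = {y ∈ F(L) : x ⊆ y}`. -/
def Kset {L : Type*} [Lattice L] [BoundedOrder L] (x : FL L) : Set (FL L) :=
  {y | x.1 ⊆ y.1}

/-- For a monadic ortholattice `L` and a proper filter `x`,
`⋂_{a ∈ x} h(∃a) = R[K_x] = {y : ∃[x] ⊆ y}`, and this set is bi-orthogonally closed,
so the canonical extension of `∃` on the closed element `K_x` is `R[K_x]^⊥⊥`. -/
theorem stmt6 {L : Type*} [Lattice L] [BoundedOrder L] (c E : L → L)
    (hc : IsOrthocompl c) (hE : IsQuantifier c E) (x : FL L) :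
    (⋂ a ∈ x.1, hset (E a)) = relImg (gR E) (Kset x) ∧
    relImg (gR E) (Kset x) = {y : FL L | E '' x.1 ⊆ y.1} ∧
    oset (gperp c) (oset (gperp c) (relImg (gR E) (Kset x))) = relImg (gR E) (Kset x) := by

  -- relImg (gR E) (Kset x) = {y | E '' x.1 ⊆ y.1}
  have h2 : relImg (gR E) (Kset x) = {y : FL L | E '' x.1 ⊆ y.1} := by
    ext y
    constructor
    · rintro ⟨z, hz, hzy⟩
      exact fun b ⟨a, ha, hb⟩ => hzy ⟨a, hz ha, hb⟩
    · intro hy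
      exact ⟨x, fun a ha => ha, hy⟩
  have h1 : (⋂ a ∈ x.1, hset (E a)) = relImg (gR E) (Kset x) := by
    rw [h2]; ext y
    simp only [Set.mem_iInter, hset, Set.mem_setOf_eq]
    constructor
    · rintro h b ⟨a, ha, rfl⟩; exact h a ha
    · intro h a ha; exact h ⟨a, ha, rfl⟩
  refine ⟨h1, h2, ?_⟩
  rw [h2]
  have symm : ∀ u v : FL L, gperp c u v → gperp c v u := by
    rintro u v ⟨a, hau, hav⟩
    exact ⟨c a, hav, (hc.involutive a).symm ▸ hau⟩
  ext y
  constructor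
  · intro hy
    -- hy : ∀ w ∈ oset (gperp c) T, gperp c w y
    simp only [Set.mem_setOf_eq]
    rintro b ⟨a, ha, rfl⟩
    by_contra hEa
    -- construct z = ↑ c(E a)
    have hprop : IsProperFilter {b : L | c (E a) ≤ b} := by
      refine ⟨⟨c (E a), le_refl _⟩, fun p hp q hpq => le_trans hp hpq,
        fun p hp q hq => le_inf hp hq, ?_⟩
      intro hbot
      have : c (E a) = ⊥ := le_bot_iff.mp hbot
      have hEtop : E a = ⊤ := by
        have := hc.involutive (E a)
        rw [this] at *
        -- c (c (E a)) = E a, and c ⊥ = ⊤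
        have hcbot : c (⊥ : L) = ⊤ := by
          have := hc.sup_compl (⊥ : L)
          simpa using this
        calc E a = c (c (E a)) := (hc.involutive (E a)).symm
          _ = c ⊥ := by rw [‹c (E a) = ⊥›]
          _ = ⊤ := hcbot
      apply hEa
      obtain ⟨p, hp⟩ := y.2.1
      exact hEtop ▸ y.2.2.1 p hp ⊤ le_top
    set z : FL L := ⟨{b : L | c (E a) ≤ b}, hprop⟩ with hzdef
    have hzperp : z ∈ oset (gperp c) {y : FL L | E '' x.1 ⊆ y.1} := by
      intro w hw
      exact ⟨E a, hw ⟨a, ha, rfl⟩, le_refl _⟩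
    obtain ⟨b, hbz, hby⟩ := hy z hzperp
    have : c b ≤ E a := by
      have := hc.antitone _ _ hbz
      rwa [hc.involutive] at this
    exact hEa (y.2.2.1 _ hby _ this)
  · intro hy w hw
    exact symm y w (hw y hy)
end

section
/- Let L be a monadic ortholattice, F(L) its set of proper filters with the Goldblatt orthogonality ⊥, R the relation x R y iff ∃[x] ⊆ y, and K_x = {y ∈ F(L) : x ⊆ y}. For every bi-orthogonally closed subset A ⊆ F(L), R[A]^⊥⊥ = (⋃{R[K_x] : x ∈ F(L), K_x ⊆ A})^⊥⊥; that is, the quantifier ∃_R A = R[A]^⊥⊥ on bi-orthogonally closed sets coincides with the canonical extension ∃^σ of ∃. -/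
open Set

/-- For a monadic ortholattice `L` and bi-orthogonally closed `A ⊆ F(L)`,
`R[A]^⊥⊥ = (⋃ {R[K_x] : K_x ⊆ A})^⊥⊥`; the quantifier `∃_R A = R[A]^⊥⊥` coincides
with the canonical extension `∃^σ` of `∃`. -/
theorem stmt7 {L : Type*} [Lattice L] [BoundedOrder L] (c E : L → L)
    (hc : IsOrthocompl c) (hE : IsQuantifier c E)
    (A : Set (FL L)) (hA : oset (gperp c) (oset (gperp c) A) = A) :
    oset (gperp c) (oset (gperp c) (relImg (gR E) A)) =
      oset (gperp c) (oset (gperp c)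
        (⋃ x ∈ {x : FL L | Kset x ⊆ A}, relImg (gR E) (Kset x))) := by
  have hup : ∀ x ∈ A, ∀ y : FL L, x.1 ⊆ y.1 → y ∈ A := by
    intro x hx y hxy
    rw [← hA] at hx ⊢
    intro z hz
    obtain ⟨a, ha, hca⟩ := hx z hz
    exact ⟨a, ha, hxy hca⟩
  have key : relImg (gR E) A =
      ⋃ x ∈ {x : FL L | Kset x ⊆ A}, relImg (gR E) (Kset x) := by
    ext y
    constructor
    · rintro ⟨x, hxA, hxy⟩
      refine mem_iUnion₂.mpr ⟨x, fun z hz => hup x hxA z hz, x, ?_, hxy⟩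
      exact fun a ha => ha
    · intro hy
      obtain ⟨x, hxA, z, hz, hzy⟩ := mem_iUnion₂.mp hy
      exact ⟨z, hxA hz, hzy⟩
  rw [key]
end

section
/- Let L be a monadic ortholattice and x, z proper filters of L. Then ∃[x] ⊆ z if and only if there exists a proper filter y of L with ∃[x] = ∃[y] and y ⊆ z. (That is, R = ↑ ∘ S, where x R z iff ∃[x] ⊆ z, x S y iff ∃[x] = ∃[y], and ↑ is set inclusion of filters.) -/
open Set

/-- For a monadic ortholattice `L` and proper filters `x, z`: `∃[x] ⊆ z` iff there
is a proper filter `y` with `∃[x] = ∃[y]` and `y ⊆ z` (i.e. `R = ↑ ∘ S`). -/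
theorem stmt8 {L : Type*} [Lattice L] [BoundedOrder L] (c E : L → L)
    (hc : IsOrthocompl c) (hE : IsQuantifier c E) (x z : FL L) :
    E '' x.1 ⊆ z.1 ↔ ∃ y : FL L, E '' x.1 = E '' y.1 ∧ y.1 ⊆ z.1 := by
  obtain ⟨hxne, hxup, hxmeet, hxbot⟩ := x.2
  obtain ⟨hzne, hzup, hzmeet, hzbot⟩ := z.2
  constructor
  · intro h
    set Y : Set L := {b | ∃ a ∈ x.1, E a ≤ b} with hY
    have hYfil : IsProperFilter Y := by
      refine ⟨?_, ?_, ?_, ?_⟩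
      · obtain ⟨a, ha⟩ := hxne
        exact ⟨E a, a, ha, le_rfl⟩
      · rintro b ⟨a, ha, hab⟩ b' hbb'
        exact ⟨a, ha, hab.trans hbb'⟩
      · rintro b ⟨a, ha, hab⟩ b' ⟨a', ha', hab'⟩
        refine ⟨a ⊓ a', hxmeet a ha a' ha', ?_⟩
        exact le_inf ((hE.mono _ _ inf_le_left).trans hab)
          ((hE.mono _ _ inf_le_right).trans hab')
      · rintro ⟨a, ha, hab⟩
        have : a = ⊥ := le_bot_iff.mp ((hE.le_exists a).trans hab)
        exact hxbot (this ▸ ha)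
    refine ⟨⟨Y, hYfil⟩, ?_, ?_⟩
    · apply Set.Subset.antisymm
      · rintro _ ⟨a, ha, rfl⟩
        exact ⟨E a, ⟨a, ha, le_rfl⟩, hE.idem a⟩
      · rintro _ ⟨b, ⟨a, ha, hab⟩, rfl⟩
        refine ⟨E b, ?_, hE.idem b⟩
        exact hxup a ha (E b) ((hE.le_exists a).trans (hab.trans (hE.le_exists b)))
    · rintro b ⟨a, ha, hab⟩
      exact hzup (E a) (h ⟨a, ha, rfl⟩) b hab
  · rintro ⟨y, hxy, hyz⟩
    rw [hxy]
    rintro _ ⟨b, hb, rfl⟩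
    exact hzup b (hyz hb) (E b) (hE.le_exists b)
end

section
/- Let L be a monadic ortholattice and on its set F(L) of proper filters define x S y iff ∃[x] = ∃[y] and x R y iff ∃[x] ⊆ y. Then: S is an equivalence relation; S[{x}]^⊥ = R[{x}]^⊥ for every x; S[S[{x}]^⊥] ⊆ S[{x}]^⊥ for every x (so (F(L), ⊥, S) is a monadic orthoframe); and S[A]^⊥⊥ = R[A]^⊥⊥ for every subset A ⊆ F(L). -/
open Set

/-- The relation `x S y` iff `∃[x] = ∃[y]` on proper filters. -/
def gS {L : Type*} [Lattice L] [BoundedOrder L] (E : L → L) (x y : FL L) : Prop :=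
  E '' x.1 = E '' y.1

section Aux

variable {L : Type*} [Lattice L] [BoundedOrder L] {c E : L → L}

/-- The filter generated by `∃[x]`. -/
def wfil (hE : IsQuantifier c E) (x : FL L) : FL L :=
  ⟨{b | ∃ a ∈ x.1, E a ≤ b}, by
    obtain ⟨⟨a0, ha0⟩, hup, hmeet, hbot⟩ := x.2
    refine ⟨⟨E a0, a0, ha0, le_rfl⟩, ?_, ?_, ?_⟩
    · rintro b ⟨a, ha, hle⟩ b' hbb'
      exact ⟨a, ha, hle.trans hbb'⟩
    · rintro b1 ⟨a1, ha1, h1⟩ b2 ⟨a2, ha2, h2⟩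
      refine ⟨E a1 ⊓ E a2, hup _ (hmeet _ ha1 _ ha2) _
        (inf_le_inf (hE.le_exists a1) (hE.le_exists a2)), ?_⟩
      exact le_trans (le_inf ((hE.mono _ _ inf_le_left).trans_eq (hE.idem a1))
        ((hE.mono _ _ inf_le_right).trans_eq (hE.idem a2))) (inf_le_inf h1 h2)
    · rintro ⟨a, ha, hle⟩
      have : a = ⊥ := le_bot_iff.mp ((hE.le_exists a).trans hle)
      exact hbot (this ▸ ha)⟩

lemma gS_wfil (hE : IsQuantifier c E) (x : FL L) : gS E x (wfil hE x) := by
  apply subset_antisymm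
  · rintro _ ⟨a, ha, rfl⟩
    exact ⟨E a, ⟨a, ha, le_rfl⟩, hE.idem a⟩
  · rintro _ ⟨b, ⟨a, ha, hab⟩, rfl⟩
    exact ⟨E b, x.2.2.1 a ha _ ((hE.le_exists a).trans (hab.trans (hE.le_exists b))),
      hE.idem b⟩

lemma gS_gR (hE : IsQuantifier c E) {x y : FL L} (h : gS E x y) : gR E x y := by
  rw [gR, h]
  rintro _ ⟨a, ha, rfl⟩
  exact y.2.2.1 a ha _ (hE.le_exists a)

/-- The key half of `S[{x}]^⊥ = R[{x}]^⊥`. -/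
lemma oset_key (hE : IsQuantifier c E) (x : FL L) :
    oset (gperp c) (relImg (gS E) {x}) = oset (gperp c) (relImg (gR E) {x}) := by
  ext z
  constructor
  · rintro hz y ⟨x', hx', hxy⟩
    rw [Set.mem_singleton_iff] at hx'; rw [hx'] at hxy
    obtain ⟨b, ⟨a, ha, hab⟩, hcb⟩ := hz (wfil hE x) ⟨x, rfl, gS_wfil hE x⟩
    exact ⟨b, y.2.2.1 (E a) (hxy ⟨a, ha, rfl⟩) b hab, hcb⟩
  · rintro hz y ⟨x', hx', hxy⟩
    rw [Set.mem_singleton_iff] at hx'; rw [hx'] at hxy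
    exact hz y ⟨x, rfl, gS_gR hE hxy⟩

end Aux

/-- For a monadic ortholattice `L`: `S` is an equivalence relation,
`S[{x}]^⊥ = R[{x}]^⊥`, `S[S[{x}]^⊥] ⊆ S[{x}]^⊥` (so `(F(L), ⊥, S)` is a monadic
orthoframe), and `S[A]^⊥⊥ = R[A]^⊥⊥` for every `A ⊆ F(L)`. -/
theorem stmt9 {L : Type*} [Lattice L] [BoundedOrder L] (c E : L → L)
    (hc : IsOrthocompl c) (hE : IsQuantifier c E) :
    Equivalence (gS (L := L) E) ∧
    (∀ x : FL L, oset (gperp c) (relImg (gS E) {x}) = oset (gperp c) (relImg (gR E) {x})) ∧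
    (∀ x : FL L, relImg (gS E) (oset (gperp c) (relImg (gS E) {x})) ⊆
      oset (gperp c) (relImg (gS E) {x})) ∧
    (∀ A : Set (FL L), oset (gperp c) (oset (gperp c) (relImg (gS E) A)) =
      oset (gperp c) (oset (gperp c) (relImg (gR E) A))) := by
  refine ⟨⟨fun x => rfl, fun h => h.symm, fun h1 h2 => h1.trans h2⟩,
    oset_key hE, ?_, ?_⟩
  · rintro x z ⟨z', hz', hSz'z⟩ y ⟨x', hx', hxy⟩
    rw [Set.mem_singleton_iff] at hx'; rw [hx'] at hxy
    obtain ⟨b, ⟨a, ha, hab⟩, hcb⟩ := hz' (wfil hE x) ⟨x, rfl, gS_wfil hE x⟩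
    -- `c (E a) ∈ z'`, hence `c (E a) ∈ ∃[z'] = ∃[z] ⊆ z`
    have hcEa : c (E a) ∈ z'.1 := z'.2.2.1 (c b) hcb _ (hc.antitone _ _ hab)
    have h1 : c (E a) ∈ E '' z'.1 := ⟨c (E a), hcEa, (hE.compl_closed a).symm⟩
    rw [hSz'z] at h1
    obtain ⟨t, ht, hEt⟩ := h1
    have hcz : c (E a) ∈ z.1 := hEt ▸ z.2.2.1 t ht _ (hE.le_exists t)
    have hEay : E a ∈ y.1 := by
      have : E a ∈ E '' y.1 := hxy ▸ ⟨a, ha, rfl⟩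
      obtain ⟨t, ht, hEt⟩ := this
      exact hEt ▸ y.2.2.1 t ht _ (hE.le_exists t)
    exact ⟨E a, hEay, hcz⟩
  · intro A
    have h : oset (gperp c) (relImg (gS E) A) = oset (gperp c) (relImg (gR E) A) := by
      ext z
      have h1 : ∀ (T : (FL L) → (FL L) → Prop),
          z ∈ oset (gperp c) (relImg T A) ↔
          ∀ x ∈ A, z ∈ oset (gperp c) (relImg T {x}) := by
        intro T
        constructor
        · rintro hz x hx y ⟨x', hx', hxy⟩
          rw [Set.mem_singleton_iff] at hx'; rw [hx'] at hxy
          exact hz y ⟨x, hx, hxy⟩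
        · rintro hz y ⟨x, hx, hxy⟩
          exact hz x hx y ⟨x, rfl, hxy⟩
      rw [h1, h1]
      exact forall₂_congr fun x _ => by rw [oset_key hE x]
    rw [h]
end

section
/- In any orthospace (X, ⊥, ≤, τ), for all x, y ∈ X: x ≤ y if and only if y ∈ {x}^⊥⊥. -/
open Set

/-- `C(X)`: the clopen bi-orthogonally closed subsets of `X`. -/
def COf {X : Type*} [TopologicalSpace X] (perp : X → X → Prop) : Set (Set X) :=
  {U | IsClopen U ∧ oset perp (oset perp U) = U}

/-- `(X, perp, ≤, τ)` is an orthospace: a compact space with an irreflexive symmetric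
relation `perp` and a partial order satisfying conditions (1)-(4). -/
structure IsOrthospace (X : Type*) [TopologicalSpace X] [PartialOrder X]
    (perp : X → X → Prop) : Prop where
  compact : CompactSpace X
  irrefl : ∀ x : X, ¬ perp x x
  symm : ∀ x y : X, perp x y → perp y x
  sep : ∀ x y : X, ¬ x ≤ y → ∃ U ∈ COf perp, x ∈ U ∧ y ∉ U
  up_perp : ∀ x y z : X, perp x z → x ≤ y → perp y z
  perp_mem : ∀ U ∈ COf perp, oset perp U ∈ COf perp
  sep_perp : ∀ x y : X, perp x y → ∃ U ∈ COf perp, x ∈ U ∧ y ∈ oset perp U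

/-- In any orthospace, `x ≤ y` iff `y ∈ {x}^⊥⊥`. -/
theorem stmt10 {X : Type*} [TopologicalSpace X] [PartialOrder X] (perp : X → X → Prop)
    (hX : IsOrthospace X perp) (x y : X) :
    x ≤ y ↔ y ∈ oset perp (oset perp {x}) := by
  constructor
  · intro hxy z hz
    exact hX.symm _ _ (hX.up_perp x y z (hz x rfl) hxy)
  · intro hy
    by_contra hxy
    obtain ⟨U, hU, hxU, hyU⟩ := hX.sep x y hxy
    apply hyU
    rw [← hU.2]
    intro z hz
    exact hy z (fun w hw => Set.mem_singleton_iff.mp hw ▸ hz x hxU)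
end

section
/- Let X be a compact topological space with an irreflexive symmetric relation ⊥ such that, writing C(X) for the clopen bi-orthogonally closed subsets: (1′) for x ≠ y there is U ∈ C(X) containing exactly one of x, y; (3) U ∈ C(X) implies U^⊥ ∈ C(X); (4) x ⊥ y implies there is U ∈ C(X) with x ∈ U and y ∈ U^⊥. Define x ≤ y iff y ∈ {x}^⊥⊥. Then ≤ is a partial order, and with this order (X, ⊥, ≤, τ) is an orthospace; in particular: if x ≰ y then there is U ∈ C(X) with x ∈ U and y ∉ U, and if x ⊥ z and x ≤ y then y ⊥ z. -/
open Set

/-- The order derived from an orthospace': `x ≤ y` iff `y ∈ {x}^⊥⊥`. -/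
def leRel {X : Type*} (perp : X → X → Prop) (x y : X) : Prop :=
  y ∈ oset perp (oset perp ({x} : Set X))

/-- If `(X, ⊥, τ)` is an orthospace' (compact, `⊥` irreflexive and symmetric,
`C(X)` separates points, `C(X)` closed under `⊥`, and points with `x ⊥ y` are
separated by some `U ∈ C(X)` with `y ∈ U^⊥`), then `x ≤ y` iff `y ∈ {x}^⊥⊥`
defines a partial order making `(X, ⊥, ≤, τ)` an orthospace: in particular (1)
if `x ≰ y` then some `U ∈ C(X)` has `x ∈ U` and `y ∉ U`, and (2) if `x ⊥ z` and
`x ≤ y` then `y ⊥ z`. -/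
theorem stmt11 {X : Type*} [TopologicalSpace X] (perp : X → X → Prop)
    (hcomp : CompactSpace X)
    (hirr : ∀ x : X, ¬ perp x x) (hsymm : ∀ x y : X, perp x y → perp y x)
    (hsep : ∀ x y : X, x ≠ y →
      ∃ U ∈ COf perp, (x ∈ U ∧ y ∉ U) ∨ (y ∈ U ∧ x ∉ U))
    (hperpC : ∀ U ∈ COf perp, oset perp U ∈ COf perp)
    (hsepp : ∀ x y : X, perp x y → ∃ U ∈ COf perp, x ∈ U ∧ y ∈ oset perp U) :
    (Reflexive (leRel perp) ∧ Transitive (leRel perp) ∧ AntiSymmetric (leRel perp)) ∧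
    (∀ x y : X, ¬ leRel perp x y → ∃ U ∈ COf perp, x ∈ U ∧ y ∉ U) ∧
    (∀ x y z : X, perp x z → leRel perp x y → perp y z) := by

  have hmem : ∀ x w : X, w ∈ oset perp ({x} : Set X) ↔ perp x w := by
    intro x w
    constructor
    · intro h; exact h x rfl
    · intro h a ha; rw [Set.mem_singleton_iff] at ha; subst ha; exact h
  have key : ∀ x y z : X, perp x z → leRel perp x y → perp y z := by
    intro x y z hxz hxy
    exact hsymm _ _ (hxy z ((hmem x z).2 hxz))
  have hrefl : Reflexive (leRel perp) := by
    intro x w hw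
    exact hsymm _ _ ((hmem x w).1 hw)
  have htrans : Transitive (leRel perp) := by
    intro x y z hxy hyz w hw
    exact hyz w ((hmem y w).2 (key x y w ((hmem x w).1 hw) hxy))
  have upclosed : ∀ U ∈ COf perp, ∀ x y, x ∈ U → leRel perp x y → y ∈ U := by
    intro U hU x y hx hxy
    rw [← hU.2]
    intro w hw
    exact hsymm _ _ (key x y w (hw x hx) hxy)
  have hanti : AntiSymmetric (leRel perp) := by
    intro x y hxy hyx
    by_contra hne
    obtain ⟨U, hU, hcase⟩ := hsep x y hne
    rcases hcase with ⟨hx, hy⟩ | ⟨hy, hx⟩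
    · exact hy (upclosed U hU x y hx hxy)
    · exact hx (upclosed U hU y x hy hyx)
  refine ⟨⟨hrefl, htrans, hanti⟩, ?_, key⟩
  intro x y hnle
  have hex : ∃ z, perp x z ∧ ¬ perp z y := by
    by_contra h
    push_neg at h
    exact hnle (fun w hw => h w ((hmem x w).1 hw))
  obtain ⟨z, hxz, hzy⟩ := hex
  obtain ⟨U, hU, hxU, hzU⟩ := hsepp x z hxz
  exact ⟨U, hU, hxU, fun hyU => hzy (hsymm _ _ (hzU y hyU))⟩
end

section
/- Let L be an ortholattice and F(L) its Goldblatt orthospace, with topology generated by the sets h(a) = {x ∈ F(L) : a ∈ x} and their set-theoretic complements. Then F(L) is ortho-sober: every proper filter of the ortholattice C(F(L)) of clopen bi-orthogonally closed subsets of F(L) (ordered by inclusion, with meet ∩) equals {U ∈ C(F(L)) : x ∈ U} for some proper filter x ∈ F(L). -/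
open Set

/-- The Goldblatt topology on `F(L)`, generated by the sets `h(a)` and their
set-theoretic complements. -/
instance goldTop (L : Type*) [Lattice L] [BoundedOrder L] : TopologicalSpace (FL L) :=
  TopologicalSpace.generateFrom ({S | ∃ a : L, S = hset a} ∪ {S | ∃ a : L, S = (hset a)ᶜ})

/-- A proper filter of the family `C` of subsets of `X`, ordered by inclusion with
meet `∩`: a nonempty subfamily of `C`, upward closed within `C`, closed under binary
intersections, and not containing `∅`. -/
def IsProperFilterOn {X : Type*} (C : Set (Set X)) (F : Set (Set X)) : Prop :=
  F ⊆ C ∧ F.Nonempty ∧ (∀ U ∈ F, ∀ V ∈ C, U ⊆ V → V ∈ F) ∧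
    (∀ U ∈ F, ∀ V ∈ F, U ∩ V ∈ F) ∧ (∅ : Set X) ∉ F

open Topology Filter

section Aux

variable {L : Type*} [Lattice L] [BoundedOrder L]

-- filter facts
lemma FL.up (x : FL L) {a b : L} (ha : a ∈ x.1) (hab : a ≤ b) : b ∈ x.1 :=
  x.2.2.1 a ha b hab

lemma FL.meet (x : FL L) {a b : L} (ha : a ∈ x.1) (hb : b ∈ x.1) : a ⊓ b ∈ x.1 :=
  x.2.2.2.1 a ha b hb

lemma FL.top_mem (x : FL L) : (⊤ : L) ∈ x.1 := by
  obtain ⟨a, ha⟩ := x.2.1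
  exact x.up ha le_top

lemma FL.bot_notMem (x : FL L) : (⊥ : L) ∉ x.1 := x.2.2.2.2

/-- The principal filter at `a ≠ ⊥`. -/
def pfil (a : L) (ha : a ≠ ⊥) : FL L :=
  ⟨{d | a ≤ d}, ⟨a, le_refl a⟩, fun _ h b hb => le_trans h hb,
   fun _ h b hb => le_inf h hb, fun h => ha (le_bot_iff.1 h)⟩

lemma pfil_mem (a : L) (ha : a ≠ ⊥) : a ∈ (pfil a ha).1 := le_refl a

-- hset facts
lemma hset_top : hset (⊤ : L) = univ := by
  ext x; simp [hset, x.top_mem]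

lemma hset_bot : hset (⊥ : L) = ∅ := by
  ext x; simp [hset, x.bot_notMem]

lemma hset_mono {a b : L} (h : a ≤ b) : hset a ⊆ hset b :=
  fun x hx => x.up hx h

lemma hset_inf (a b : L) : hset (a ⊓ b) = hset a ∩ hset b := by
  ext x
  exact ⟨fun h => ⟨x.up h inf_le_left, x.up h inf_le_right⟩, fun ⟨h1, h2⟩ => x.meet h1 h2⟩

lemma hset_isOpen (a : L) : IsOpen (hset a : Set (FL L)) :=
  TopologicalSpace.GenerateOpen.basic _ (Or.inl ⟨a, rfl⟩)

lemma hset_compl_isOpen (a : L) : IsOpen ((hset a)ᶜ : Set (FL L)) :=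
  TopologicalSpace.GenerateOpen.basic _ (Or.inr ⟨a, rfl⟩)

lemma hset_isClopen (a : L) : IsClopen (hset a : Set (FL L)) :=
  ⟨⟨hset_compl_isOpen a⟩, hset_isOpen a⟩

variable {c : L → L} (hc : IsOrthocompl c)

lemma c_top (hc : IsOrthocompl c) : c (⊤ : L) = ⊥ := by
  have := hc.antitone (c ⊥) ⊤ le_top
  rw [hc.involutive] at this
  exact le_bot_iff.1 this

lemma c_bot (hc : IsOrthocompl c) : c (⊥ : L) = ⊤ := by
  rw [← c_top hc, hc.involutive]

lemma oset_hset (hc : IsOrthocompl c) (a : L) :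
    oset (gperp c) (hset a) = hset (c a) := by
  ext y
  constructor
  · intro hy
    by_cases ha : a = ⊥
    · subst ha; rw [c_bot hc]; exact y.top_mem
    · obtain ⟨e, hae, hce⟩ := hy (pfil a ha) (pfil_mem a ha)
      exact y.up hce (hc.antitone a e hae)
  · intro hy z hz
    exact ⟨a, hz, hy⟩

lemma hset_mem_COf (hc : IsOrthocompl c) (a : L) : hset a ∈ COf (gperp c) := by
  refine ⟨hset_isClopen a, ?_⟩
  rw [oset_hset hc, oset_hset hc, hc.involutive]

end Aux

section Main

variable {L : Type*} [Lattice L] [BoundedOrder L]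

lemma le_nhds_goldTop (x : FL L) (f : Filter (FL L))
    (h1 : ∀ a : L, a ∈ x.1 → hset a ∈ f)
    (h2 : ∀ a : L, a ∉ x.1 → (hset a)ᶜ ∈ f) : f ≤ 𝓝 x := by
  rw [show @nhds (FL L) (goldTop L) x = @nhds (FL L)
      (TopologicalSpace.generateFrom
        ({S | ∃ a : L, S = hset a} ∪ {S | ∃ a : L, S = (hset a)ᶜ})) x from rfl,
    TopologicalSpace.nhds_generateFrom]
  refine le_iInf₂ fun s hs => Filter.le_principal_iff.2 ?_
  obtain ⟨hxs, ⟨a, rfl⟩ | ⟨a, rfl⟩⟩ := hs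
  · exact h1 a hxs
  · exact h2 a hxs

instance : CompactSpace (FL L) := by
  refine ⟨isCompact_iff_ultrafilter_le_nhds.2 fun f _ => ?_⟩
  have hx : IsProperFilter {a : L | hset a ∈ f} := by
    refine ⟨⟨⊤, ?_⟩, ?_, ?_, ?_⟩
    · show hset (⊤ : L) ∈ f
      rw [hset_top]; exact Filter.univ_mem
    · intro a ha b hab
      exact Filter.mem_of_superset ha (hset_mono hab)
    · intro a ha b hb
      show hset (a ⊓ b) ∈ f
      rw [hset_inf]; exact Filter.inter_mem ha hb
    · intro h
      have : hset (⊥ : L) ∈ f := h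
      rw [hset_bot] at this
      exact Filter.empty_notMem (f : Filter (FL L)) this
  refine ⟨⟨_, hx⟩, mem_univ _, le_nhds_goldTop _ _ (fun a ha => ha) ?_⟩
  intro a ha
  exact (Ultrafilter.compl_mem_iff_notMem).2 ha

lemma open_point {Y : Set (FL L)}
    (hYo : TopologicalSpace.GenerateOpen
      ({S | ∃ a : L, S = hset a} ∪ {S | ∃ a : L, S = (hset a)ᶜ}) Y) :
    ∀ x ∈ Y, ∃ (a : L) (bs : Finset L), a ∈ x.1 ∧ (∀ b ∈ bs, b ∉ x.1) ∧
      ∀ z : FL L, a ∈ z.1 → (∀ b ∈ bs, b ∉ z.1) → z ∈ Y := by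
  classical
  induction hYo with
  | basic S hS =>
      intro x hx
      rcases hS with ⟨a, rfl⟩ | ⟨a, rfl⟩
      · exact ⟨a, ∅, hx, by simp, fun z hz _ => hz⟩
      · refine ⟨⊤, {a}, x.top_mem, ?_, ?_⟩
        · intro b hb
          rw [Finset.mem_singleton] at hb
          subst hb; exact hx
        · intro z _ hz
          exact hz a (Finset.mem_singleton_self a)
  | univ => exact fun x _ => ⟨⊤, ∅, x.top_mem, by simp, fun _ _ _ => mem_univ _⟩
  | inter S T _ _ ihS ihT =>
      intro x hx
      obtain ⟨a1, b1, ha1, hb1, hz1⟩ := ihS x hx.1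
      obtain ⟨a2, b2, ha2, hb2, hz2⟩ := ihT x hx.2
      refine ⟨a1 ⊓ a2, b1 ∪ b2, x.meet ha1 ha2, ?_, ?_⟩
      · intro b hb
        rcases Finset.mem_union.1 hb with h | h
        exacts [hb1 b h, hb2 b h]
      · intro z hz hbz
        exact ⟨hz1 z (z.up hz inf_le_left) (fun b hb => hbz b (Finset.mem_union_left _ hb)),
               hz2 z (z.up hz inf_le_right) (fun b hb => hbz b (Finset.mem_union_right _ hb))⟩
  | sUnion 𝒮 _ ih =>
      intro x hx
      obtain ⟨S, hS, hxS⟩ := hx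
      obtain ⟨a, bs, h1, h2, h3⟩ := ih S hS x hxS
      exact ⟨a, bs, h1, h2, fun z hz1 hz2 => ⟨S, hS, h3 z hz1 hz2⟩⟩

variable {c : L → L}

lemma mem_open_biorth (hc : IsOrthocompl c) {Y : Set (FL L)}
    (hbi : oset (gperp c) (oset (gperp c) Y) = Y) (hYo : IsOpen Y)
    {x : FL L} (hx : x ∈ Y) : ∃ a ∈ x.1, hset a ⊆ Y := by
  obtain ⟨a, bs, ha, hbs, hz⟩ := open_point hYo x hx
  have hane : a ≠ ⊥ := fun h => x.bot_notMem (h ▸ ha)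
  have hp : pfil a hane ∈ Y :=
    hz _ (pfil_mem a hane) (fun b hb hab => hbs b hb (x.up ha hab))
  refine ⟨a, ha, ?_⟩
  rw [← hbi]
  intro z hza y hy
  obtain ⟨e, hae, hce⟩ := hy _ hp
  have hca : c a ∈ y.1 := y.up hce (hc.antitone a e hae)
  exact ⟨c a, hca, by rw [hc.involutive]; exact hza⟩

lemma mem_finset_inf {ι : Type*} (x : FL L) (f : ι → L) :
    ∀ t : Finset ι, (∀ i ∈ t, f i ∈ x.1) → t.inf f ∈ x.1 := by
  classical
  intro t
  induction t using Finset.induction_on with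
  | empty => intro _; simpa using x.top_mem
  | @insert i s _ ih =>
      intro h
      rw [Finset.inf_insert]
      exact x.meet (h i (Finset.mem_insert_self i s))
        (ih fun j hj => h j (Finset.mem_insert_of_mem hj))

lemma COf_eq_hset (hc : IsOrthocompl c) {Y : Set (FL L)}
    (hY : Y ∈ COf (gperp c)) : ∃ a : L, Y = hset a := by
  obtain ⟨⟨hcl, hop⟩, hbi⟩ := hY
  have hcov : Y ⊆ ⋃ i : {a : L // hset a ⊆ Y}, hset i.1 := by
    intro x hx
    obtain ⟨a, ha, hsub⟩ := mem_open_biorth hc hbi hop hx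
    exact mem_iUnion.2 ⟨⟨a, hsub⟩, ha⟩
  obtain ⟨t, ht⟩ := hcl.isCompact.elim_finite_subcover
      (fun i : {a : L // hset a ⊆ Y} => hset i.1) (fun i => hset_isOpen i.1) hcov
  have hYeq : Y = ⋃ i ∈ t, hset i.1 :=
    subset_antisymm ht (iUnion₂_subset fun i _ => i.2)
  refine ⟨c (t.inf fun i => c i.1), ?_⟩
  have h1 : oset (gperp c) (⋃ i ∈ t, hset i.1) = hset (t.inf fun i => c i.1) := by
    ext y
    constructor
    · intro hy
      refine mem_finset_inf y _ t fun i hi => ?_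
      have hmem : y ∈ oset (gperp c) (hset i.1) := fun z hz => hy z (mem_biUnion hi hz)
      rw [oset_hset hc] at hmem
      exact hmem
    · intro hy z hz
      obtain ⟨i, hi, hzi⟩ := mem_iUnion₂.1 hz
      exact ⟨i.1, hzi, y.up hy (Finset.inf_le hi)⟩
  have h2 : oset (gperp c) Y = hset (t.inf fun i => c i.1) :=
    (congrArg _ hYeq).trans h1
  have h3 : oset (gperp c) (oset (gperp c) Y) = hset (c (t.inf fun i => c i.1)) := by
    rw [h2, oset_hset hc]
  exact hbi.symm.trans h3

end Main

/-- The Goldblatt orthospace of an ortholattice is ortho-sober: every proper filter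
of `C(F(L))` is `{U ∈ C(F(L)) : x ∈ U}` for some proper filter `x` of `L`. -/
theorem stmt13 {L : Type*} [Lattice L] [BoundedOrder L] (c : L → L)
    (hc : IsOrthocompl c)
    (F : Set (Set (FL L))) (hF : IsProperFilterOn (COf (gperp c)) F) :
    ∃ x : FL L, F = {U | U ∈ COf (gperp c) ∧ x ∈ U} := by
  obtain ⟨hFC, hFne, hFup, hFint, hFbot⟩ := hF
  have hx : IsProperFilter {a : L | hset a ∈ F} := by
    refine ⟨⟨⊤, ?_⟩, ?_, ?_, ?_⟩
    · obtain ⟨U, hU⟩ := hFne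
      exact hFup U hU (hset (⊤ : L)) (hset_mem_COf hc ⊤) (by rw [hset_top]; exact subset_univ U)
    · intro a ha b hab
      exact hFup _ ha _ (hset_mem_COf hc b) (hset_mono hab)
    · intro a ha b hb
      have := hFint _ ha _ hb
      rw [← hset_inf] at this
      exact this
    · intro h
      have h' : hset (⊥ : L) ∈ F := h
      rw [hset_bot] at h'
      exact hFbot h'
  refine ⟨⟨_, hx⟩, ?_⟩
  ext U
  constructor
  · intro hU
    have hUC := hFC hU
    obtain ⟨a, rfl⟩ := COf_eq_hset hc hUC
    exact ⟨hUC, hU⟩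
  · rintro ⟨hUC, hxU⟩
    obtain ⟨a, rfl⟩ := COf_eq_hset hc hUC
    exact hxU
end

section
/- Let L be a monadic ortholattice and F(L) its Goldblatt orthospace with topology generated by the sets h(a) = {x ∈ F(L) : a ∈ x} and their set-theoretic complements, and relation x R y iff ∃[x] ⊆ y. Then the map h_L : L → C(F(L)), h_L(a) = h(a), is a monadic ortholattice isomorphism: it is a bijection from L onto the set C(F(L)) of clopen bi-orthogonally closed subsets of F(L), with h(a ⊓ b) = h(a) ∩ h(b), h(a′) = h(a)^⊥, h(0) = ∅, h(1) = F(L), and h(∃a) = R[h(a)]^⊥⊥. -/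
open Set

namespace GoldAux

variable {L : Type*} [Lattice L] [BoundedOrder L] {c E : L → L}

theorem mem_mono (x : FL L) {a b : L} (ha : a ∈ x.1) (h : a ≤ b) : b ∈ x.1 :=
  x.2.2.1 a ha b h

theorem top_mem (x : FL L) : (⊤ : L) ∈ x.1 := by
  obtain ⟨a, ha⟩ := x.2.1
  exact mem_mono x ha le_top

theorem inf_mem (x : FL L) {a b : L} (ha : a ∈ x.1) (hb : b ∈ x.1) : a ⊓ b ∈ x.1 :=
  x.2.2.2.1 a ha b hb

theorem bot_not_mem (x : FL L) : (⊥ : L) ∉ x.1 := x.2.2.2.2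

theorem hset_mono {a b : L} (h : a ≤ b) : hset a ⊆ hset (L := L) b :=
  fun x hx => mem_mono x hx h

theorem hset_inf (a b : L) : hset (a ⊓ b) = hset a ∩ hset (L := L) b := by
  ext x
  exact ⟨fun h => ⟨mem_mono x h inf_le_left, mem_mono x h inf_le_right⟩,
    fun ⟨h1, h2⟩ => inf_mem x h1 h2⟩

theorem hset_bot : hset (⊥ : L) = (∅ : Set (FL L)) := by
  ext x; simp only [hset, mem_setOf_eq, mem_empty_iff_false, iff_false]
  exact bot_not_mem x

theorem hset_top : hset (⊤ : L) = (univ : Set (FL L)) :=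
  eq_univ_of_forall fun x => top_mem x

/-- principal filter -/
def pf (a : L) (ha : a ≠ ⊥) : FL L :=
  ⟨{b | a ≤ b}, ⟨a, le_refl a⟩, fun _ hx b hb => le_trans hx hb,
    fun _ hx _ hb => le_inf hx hb, fun h => ha (le_bot_iff.1 h)⟩

theorem hset_le {a b : L} (h : hset (L := L) a ⊆ hset b) : a ≤ b := by
  rcases eq_or_ne a ⊥ with rfl | ha
  · exact bot_le
  · exact h (show pf a ha ∈ hset a from le_refl a)

theorem hset_injective : Function.Injective (hset (L := L)) := fun a b hab =>
  le_antisymm (hset_le hab.le) (hset_le hab.ge)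

theorem c_bot (hc : IsOrthocompl c) : c (⊥ : L) = ⊤ := by
  have := hc.sup_compl ⊥; simpa using this

theorem c_top (hc : IsOrthocompl c) : c (⊤ : L) = ⊥ := by
  have := hc.inf_compl ⊤; simpa using this

theorem gperp_irrefl (hc : IsOrthocompl c) (y : FL L) : ¬ gperp c y y := by
  rintro ⟨a, ha, hca⟩
  exact bot_not_mem y (hc.inf_compl a ▸ inf_mem y ha hca)

theorem gperp_symm (hc : IsOrthocompl c) {x y : FL L} (h : gperp c x y) : gperp c y x := by
  obtain ⟨a, ha, hca⟩ := h
  exact ⟨c a, hca, by rw [hc.involutive]; exact ha⟩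

theorem oset_hset (hc : IsOrthocompl c) (a : L) :
    oset (gperp c) (hset a) = hset (L := L) (c a) := by
  ext y
  constructor
  · intro hy
    rcases eq_or_ne a ⊥ with rfl | ha
    · show c ⊥ ∈ y.1; rw [c_bot hc]; exact top_mem y
    · obtain ⟨b, hb, hcb⟩ := hy (pf a ha) (le_refl a)
      exact mem_mono y hcb (hc.antitone a b hb)
  · intro hy x hx
    exact ⟨a, hx, hy⟩

theorem isOpen_hset (a : L) : IsOpen (hset (L := L) a) :=
  TopologicalSpace.isOpen_generateFrom_of_mem (Or.inl ⟨a, rfl⟩)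

theorem isOpen_hset_compl (a : L) : IsOpen (hset (L := L) a)ᶜ :=
  TopologicalSpace.isOpen_generateFrom_of_mem (Or.inr ⟨a, rfl⟩)

theorem isClopen_hset (a : L) : IsClopen (hset (L := L) a) :=
  ⟨isOpen_compl_iff.1 (isOpen_hset_compl a), isOpen_hset a⟩

theorem compactSpace : CompactSpace (FL L) := by
  constructor
  rw [isCompact_iff_ultrafilter_le_nhds]
  intro f _
  have hx : IsProperFilter {a : L | hset a ∈ f} := by
    refine ⟨⟨⊤, ?_⟩, fun a ha b hab => ?_, fun a ha b hb => ?_, ?_⟩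
    · show hset (⊤ : L) ∈ f; rw [hset_top]; exact Filter.univ_mem
    · exact Filter.mem_of_superset ha (hset_mono hab)
    · show hset (a ⊓ b) ∈ f; rw [hset_inf]; exact Filter.inter_mem ha hb
    · show hset (⊥ : L) ∉ f; rw [hset_bot]; exact f.empty_notMem
  refine ⟨⟨_, hx⟩, mem_univ _, ?_⟩
  have hnhds : @nhds _ (goldTop L) ⟨_, hx⟩ =
      ⨅ s ∈ {s | (⟨_, hx⟩ : FL L) ∈ s ∧
        s ∈ ({S | ∃ a : L, S = hset a} ∪ {S | ∃ a : L, S = (hset a)ᶜ})}, Filter.principal s :=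
    TopologicalSpace.nhds_generateFrom
  rw [hnhds]
  refine le_iInf₂ fun s hs => ?_
  rw [Filter.le_principal_iff]
  rcases hs.2 with ⟨a, rfl⟩ | ⟨a, rfl⟩
  · exact hs.1
  · exact (Ultrafilter.compl_mem_iff_notMem).2 hs.1

theorem oset_biUnion {X ι : Type*} (perp : X → X → Prop) (s : Set ι) (f : ι → Set X) :
    oset perp (⋃ i ∈ s, f i) = ⋂ i ∈ s, oset perp (f i) := by
  ext y
  simp only [oset, mem_setOf_eq, mem_iUnion, mem_iInter]
  aesop

theorem hset_finset_inf (f : L → L) (t : Finset L) :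
    hset (t.inf f) = ⋂ m ∈ t, hset (L := L) (f m) := by
  classical
  induction t using Finset.induction_on with
  | empty => simp [hset_top]
  | insert _ _ h ih => rw [Finset.inf_insert, hset_inf, ih]; simp

theorem finset_inf_mem (y : FL L) (t : Finset L) (h : ∀ b ∈ t, b ∈ y.1) :
    t.inf id ∈ y.1 := by
  classical
  induction t using Finset.induction_on with
  | empty => simpa using top_mem y
  | @insert a s _ ih =>
    rw [Finset.inf_insert]
    exact inf_mem y (h a (Finset.mem_insert_self a s))
      (ih fun b hb => h b (Finset.mem_insert_of_mem hb))

theorem surj (hc : IsOrthocompl c) (U : Set (FL L)) (hcl : IsClopen U)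
    (hbi : oset (gperp c) (oset (gperp c) U) = U) : ∃ a : L, hset a = U := by
  haveI := compactSpace (L := L)
  have hUcpt : IsCompact U := hcl.1.isCompact
  set M : Set L := {m : L | U ⊆ hset (c m)} with hM
  have key : oset (gperp c) U = ⋃ m ∈ M, hset (L := L) m := by
    ext y
    constructor
    · intro hy
      have hcov : U ⊆ ⋃ b ∈ y.1, hset (c b) := by
        intro x hx
        obtain ⟨a, hax, hcay⟩ := hy x hx
        refine mem_iUnion₂.2 ⟨c a, hcay, ?_⟩
        show c (c a) ∈ x.1
        rw [hc.involutive]; exact hax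
      obtain ⟨b', hb'sub, hb'fin, hb'cov⟩ :=
        hUcpt.elim_finite_subcover_image (fun i _ => isOpen_hset (c i)) hcov
      set t := hb'fin.toFinset with ht
      have hmem : t.inf id ∈ y.1 :=
        finset_inf_mem y t fun b hb => hb'sub (hb'fin.mem_toFinset.1 hb)
      refine mem_iUnion₂.2 ⟨t.inf id, ?_, hmem⟩
      intro x hx
      obtain ⟨b, hb, hxb⟩ := mem_iUnion₂.1 (hb'cov hx)
      exact mem_mono x hxb (hc.antitone _ _ (Finset.inf_le (hb'fin.mem_toFinset.2 hb)))
    · intro hy x hx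
      obtain ⟨m, hmM, hmy⟩ := mem_iUnion₂.1 hy
      refine ⟨c m, hmM hx, ?_⟩
      rw [hc.involutive]; exact hmy
  have hUrep : U = ⋂ m ∈ M, hset (L := L) (c m) := by
    rw [← hbi, key, oset_biUnion]
    exact iInter₂_congr fun m _ => oset_hset hc m
  have hcompl : Uᶜ ⊆ ⋃ m ∈ M, (hset (L := L) (c m))ᶜ := by
    intro x hx
    rw [hUrep] at hx
    simpa using hx
  obtain ⟨M', hM'sub, hM'fin, hM'cov⟩ :=
    (hcl.compl.1.isCompact).elim_finite_subcover_image
      (fun i _ => isOpen_hset_compl (c i)) hcompl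
  set t := hM'fin.toFinset with ht
  refine ⟨t.inf c, ?_⟩
  rw [hset_finset_inf]
  apply Subset.antisymm
  · intro x hx
    by_contra hxU
    obtain ⟨m, hm, hxm⟩ := mem_iUnion₂.1 (hM'cov hxU)
    exact hxm (mem_iInter₂.1 hx m (hM'fin.mem_toFinset.2 hm))
  · intro x hx
    refine mem_iInter₂.2 fun m hm => ?_
    exact (hM'sub (hM'fin.mem_toFinset.1 hm)) hx

theorem E_bot (hc : IsOrthocompl c) (hE : IsQuantifier c E) : E (⊥ : L) = ⊥ := by
  have hEtop : E (⊤ : L) = ⊤ := le_antisymm le_top (hE.le_exists ⊤)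
  have h := hE.compl_closed (⊤ : L)
  rw [hEtop, c_top hc] at h
  exact h.symm

theorem oset_relImg (hc : IsOrthocompl c) (hE : IsQuantifier c E) (a : L) :
    oset (gperp c) (relImg (gR E) (hset a)) = hset (L := L) (c (E a)) := by
  ext y
  constructor
  · intro hy
    rcases eq_or_ne a ⊥ with rfl | ha
    · show c (E ⊥) ∈ y.1
      rw [E_bot hc hE, c_bot hc]; exact top_mem y
    · have hEa : E a ≠ ⊥ := fun h => ha (le_bot_iff.1 (h ▸ hE.le_exists a))
      have hz : pf (E a) hEa ∈ relImg (gR E) (hset a) := by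
        refine ⟨pf a ha, le_refl a, ?_⟩
        rintro _ ⟨b, hb, rfl⟩
        exact hE.mono a b hb
      obtain ⟨b, hbz, hcb⟩ := hy _ hz
      exact mem_mono y hcb (hc.antitone _ _ hbz)
  · rintro hy z ⟨x, hax, hRxz⟩
    exact ⟨E a, hRxz ⟨a, hax, rfl⟩, hy⟩

end GoldAux

/-- For a monadic ortholattice `L`, the map `h_L : L → C(F(L))` is a monadic
ortholattice isomorphism: it is a bijection of `L` onto the clopen bi-orthogonally
closed subsets of the Goldblatt orthospace `F(L)`, with `h(a ⊓ b) = h(a) ∩ h(b)`,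
`h(a′) = h(a)^⊥`, `h(0) = ∅`, `h(1) = F(L)`, and `h(∃a) = R[h(a)]^⊥⊥`. -/
theorem stmt14 {L : Type*} [Lattice L] [BoundedOrder L] (c E : L → L)
    (hc : IsOrthocompl c) (hE : IsQuantifier c E) :
    Function.Injective (hset (L := L)) ∧
    (∀ a : L, hset a ∈ COf (gperp c)) ∧
    (∀ U ∈ COf (gperp c), ∃ a : L, hset a = U) ∧
    (∀ a b : L, hset (a ⊓ b) = hset a ∩ hset b) ∧
    (∀ a : L, hset (c a) = oset (gperp c) (hset a)) ∧
    hset (⊥ : L) = (∅ : Set (FL L)) ∧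
    hset (⊤ : L) = (Set.univ : Set (FL L)) ∧
    (∀ a : L, hset (E a) = oset (gperp c) (oset (gperp c) (relImg (gR E) (hset a)))) := by
  
  refine ⟨GoldAux.hset_injective, ?_, ?_, GoldAux.hset_inf, ?_, GoldAux.hset_bot,
    GoldAux.hset_top, ?_⟩
  · intro a
    exact ⟨GoldAux.isClopen_hset a, by
      rw [GoldAux.oset_hset hc, GoldAux.oset_hset hc, hc.involutive]⟩
  · rintro U ⟨hcl, hbi⟩
    exact GoldAux.surj hc U hcl hbi
  · intro a
    exact (GoldAux.oset_hset hc a).symm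
  · intro a
    rw [GoldAux.oset_relImg hc hE, GoldAux.oset_hset hc, hc.involutive]
end

section
/- Let L and M be monadic ortholattices and f : L → M a monadic ortholattice homomorphism. Then: (i) for every proper filter y of M, f⁻¹[y] is a proper filter of L, so ψ : F(M) → F(L), ψ(y) = f⁻¹[y], is well defined; (ii) for every a ∈ L, ψ⁻¹[h_L(a)] = h_M(f(a)); and (iii) for every a ∈ L, R_M[ψ⁻¹[h_L(a)]] = ψ⁻¹[R_L[h_L(a)]], where R_L and R_M are the relations x R y iff ∃[x] ⊆ y on F(L) and F(M) respectively. -/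
open Set

/-- A monadic ortholattice homomorphism: preserves `⊓`, `⊔`, `0`, `1`, `′` and `∃`. -/
def IsMonadicOLHom {L M : Type*} [Lattice L] [BoundedOrder L] [Lattice M] [BoundedOrder M]
    (cL EL : L → L) (cM EM : M → M) (f : L → M) : Prop :=
  (∀ a b : L, f (a ⊓ b) = f a ⊓ f b) ∧ (∀ a b : L, f (a ⊔ b) = f a ⊔ f b) ∧
  f ⊥ = ⊥ ∧ f ⊤ = ⊤ ∧ (∀ a : L, f (cL a) = cM (f a)) ∧ ∀ a : L, f (EL a) = EM (f a)

lemma principal_proper {L : Type*} [Lattice L] [BoundedOrder L] {a : L} (ha : a ≠ ⊥) :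
    IsProperFilter {b : L | a ≤ b} := by
  refine ⟨⟨a, le_refl a⟩, fun b hb c hbc => le_trans hb hbc,
    fun b hb c hc => le_inf hb hc, fun h => ha (le_bot_iff.mp h)⟩

lemma quant_bot {L : Type*} [Lattice L] [BoundedOrder L] {c E : L → L}
    (hc : IsOrthocompl c) (hE : IsQuantifier c E) : E ⊥ = ⊥ := by
  have htop : E ⊤ = ⊤ := le_antisymm le_top (hE.le_exists ⊤)
  have hcb : c ⊤ = ⊥ := by
    have := hc.inf_compl ⊤
    simpa using this
  have := hE.compl_closed ⊤
  rw [htop, hcb] at this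
  exact this.symm

/-- For a monadic ortholattice homomorphism `f : L → M`: (i) `f⁻¹[y]` is a proper
filter for each proper filter `y` of `M`, so `ψ(y) = f⁻¹[y]` is well defined;
(ii) `ψ⁻¹[h_L(a)] = h_M(f(a))`; and (iii) `R_M[ψ⁻¹[h_L(a)]] = ψ⁻¹[R_L[h_L(a)]]`. -/
theorem stmt17 {L M : Type*} [Lattice L] [BoundedOrder L] [Lattice M] [BoundedOrder M]
    (cL EL : L → L) (cM EM : M → M)
    (hcL : IsOrthocompl cL) (hEL : IsQuantifier cL EL)
    (hcM : IsOrthocompl cM) (hEM : IsQuantifier cM EM)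
    (f : L → M) (hf : IsMonadicOLHom cL EL cM EM f) :
    (∀ y : FL M, IsProperFilter (f ⁻¹' y.1)) ∧
    ∀ ψ : FL M → FL L, (∀ y : FL M, (ψ y).1 = f ⁻¹' y.1) →
      (∀ a : L, ψ ⁻¹' hset a = hset (f a)) ∧
      (∀ a : L, relImg (gR EM) (ψ ⁻¹' hset a) = ψ ⁻¹' relImg (gR EL) (hset a)) := by
  obtain ⟨hinf, hsup, hbot, htop, hcompl, hquant⟩ := hf
  have hmono : ∀ a b : L, a ≤ b → f a ≤ f b := by
    intro a b hab
    have : f (a ⊓ b) = f a := by rw [inf_eq_left.mpr hab]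
    rw [hinf] at this
    exact this ▸ inf_le_right
  have part1 : ∀ y : FL M, IsProperFilter (f ⁻¹' y.1) := by
    intro y
    obtain ⟨⟨b0, hb0⟩, hup, hmeet, hnbot⟩ := y.2
    refine ⟨⟨⊤, ?_⟩, ?_, ?_, ?_⟩
    · show f ⊤ ∈ y.1
      rw [htop]; exact hup b0 hb0 ⊤ le_top
    · intro a ha b hab
      exact hup (f a) ha (f b) (hmono a b hab)
    · intro a ha b hb
      show f (a ⊓ b) ∈ y.1
      rw [hinf]; exact hmeet (f a) ha (f b) hb
    · intro h
      exact hnbot (hbot ▸ h)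
  refine ⟨part1, fun ψ hψ => ?_⟩
  have part2 : ∀ a : L, ψ ⁻¹' hset a = hset (f a) := by
    intro a
    ext y
    simp only [Set.mem_preimage, hset, Set.mem_setOf_eq, hψ y]
  refine ⟨part2, fun a => ?_⟩
  have hEMbot : EM ⊥ = ⊥ := quant_bot hcM hEM
  ext y'
  constructor
  · rintro ⟨y, hy, hR⟩
    -- y : FL M, f a ∈ (ψ y).1 = f⁻¹ y.1, hR : EM '' y.1 ⊆ y'.1
    have hfa : f a ∈ y.1 := by
      have := hy; rw [Set.mem_preimage, hset, Set.mem_setOf_eq, hψ y] at this; exact this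
    have hane : a ≠ ⊥ := by
      intro h
      apply y.2.2.2.2
      rw [h, hbot] at hfa
      exact hfa
    refine ⟨⟨{b | a ≤ b}, principal_proper hane⟩, le_refl a, ?_⟩
    -- gR EL x (ψ y')
    rintro _ ⟨b, hb, rfl⟩
    rw [hψ y']
    show f (EL b) ∈ y'.1
    rw [hquant]
    have h1 : EM (f a) ∈ y'.1 := hR ⟨f a, hfa, rfl⟩
    exact y'.2.2.1 _ h1 _ (hEM.mono _ _ (hmono a b hb))
  · rintro ⟨x, hax, hR⟩
    -- x : FL L, a ∈ x.1, hR : EL '' x.1 ⊆ (ψ y').1 = f⁻¹ y'.1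
    have hfEa : f (EL a) ∈ y'.1 := by
      have := hR ⟨a, hax, rfl⟩
      rwa [hψ y'] at this
    have hfane : f a ≠ ⊥ := by
      intro h
      apply y'.2.2.2.2
      rw [hquant, h, hEMbot] at hfEa
      exact hfEa
    refine ⟨⟨{b | f a ≤ b}, principal_proper hfane⟩, ?_, ?_⟩
    · show a ∈ (ψ _).1
      rw [hψ]
      exact le_refl (f a)
    · rintro _ ⟨b, hb, rfl⟩
      exact y'.2.2.1 _ hfEa _ ((hquant a) ▸ hEM.mono _ _ hb)
end
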